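/- For 0 < a < 1, the branch ψ₋₁(a,·) is (improperly) integrable on [L_a, 0) and ∫_{L_a}^{0} ψ₋₁(a,x) dx = 2·L_a/(1 − a²) − L_a·M_a, which equals (((1−a)/(1+a))^{1/(2a)} / (2·√(1−a²)))·( −4a/(1−a²) + log((1−a)/(1+a)) ). -/

import Mathlib

/-- `f(a,w) = sinh(a·w)·e^w`. -/
noncomputable def fab (a w : ℝ) : ℝ := Real.sinh (a * w) * Real.exp w

/-- `M_a = (1/(2a))·log((1−a)/(1+a))`. -/
noncomputable def Ma (a : ℝ) : ℝ := (1 / (2 * a)) * Real.log ((1 - a) / (1 + a))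

/-- `L_a = −(a/√(1−a²))·((1−a)/(1+a))^{1/(2a)}`, the minimum value of `f(a,·)`. -/
noncomputable def La (a : ℝ) : ℝ :=
  -(a / Real.sqrt (1 - a ^ 2)) * ((1 - a) / (1 + a)) ^ (1 / (2 * a))

open Real Set Filter MeasureTheory Topology

/-!
Substituting `x = f(a,w)` turns `∫_{L_a}^0 ψ₋₁(a,x) dx` into
`∫_{-∞}^{M_a} w |∂_w f(a,w)| dw`. On `(-∞, M_a)` the derivative is negative, so the integrand is
`-w ∂_w f(a,w)`; integrating by parts, it has the primitive `F(w) - w f(a,w)` with `F` a primitive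
of `f(a,·)`, which tends to `0` at `-∞`. An integrand of constant sign whose primitive has a limit
is integrable, and the integral is the value of the primitive at `M_a`, computed from
`e^{2a M_a} = (1-a)/(1+a)`.
-/

theorem integrableOn_Iic_deriv_of_nonpos' {g g' : ℝ → ℝ} {a l : ℝ}
    (hderiv : ∀ x ∈ Iic a, HasDerivAt g (g' x) x) (g'neg : ∀ x ∈ Iio a, g' x ≤ 0)
    (hg : Tendsto g atBot (𝓝 l)) : IntegrableOn g' (Iic a) := by
  have hreflected : IntegrableOn (fun x => -g' (-x)) (Ioi (-a)) := by
    refine integrableOn_Ioi_deriv_of_nonneg' (g := fun x => g (-x)) (fun x hx => ?_)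
      (fun x hx => neg_nonneg.2 (g'neg _ (mem_Iio.2 (neg_lt.1 hx))))
      (hg.comp tendsto_neg_atTop_atBot)
    exact ((hderiv (-x) (mem_Iic.2 (neg_le.1 hx))).comp x (hasDerivAt_neg x)).congr_deriv
      (by ring)
  simpa using ((integrableOn_Ici_iff_integrableOn_Ioi).2 hreflected.neg).comp_neg_Iic

theorem integrableOn_image_iff_of_leftInvOn {s : Set ℝ} {f f' g : ℝ → ℝ}
    (hs : MeasurableSet s) (hf' : ∀ x ∈ s, HasDerivWithinAt f (f' x) s x)
    (hg : LeftInvOn g f s) :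
    IntegrableOn g (f '' s) ↔ IntegrableOn (fun x => |f' x| * x) s := by
  rw [integrableOn_image_iff_integrableOn_abs_deriv_smul hs hf' hg.injOn]
  exact integrableOn_congr_fun (fun x hx => by rw [smul_eq_mul, hg hx]) hs

theorem integral_image_eq_of_leftInvOn {s : Set ℝ} {f f' g : ℝ → ℝ}
    (hs : MeasurableSet s) (hf' : ∀ x ∈ s, HasDerivWithinAt f (f' x) s x)
    (hg : LeftInvOn g f s) :
    ∫ y in f '' s, g y = ∫ x in s, |f' x| * x := by
  rw [integral_image_eq_integral_abs_deriv_smul hs hf' hg.injOn]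
  exact setIntegral_congr_fun hs fun x hx => by rw [smul_eq_mul, hg hx]

theorem tendsto_mul_exp_mul_atBot {c : ℝ} (hc : 0 < c) :
    Tendsto (fun w => w * exp (c * w)) atBot (𝓝 0) := by
  simpa using ((tendsto_rpow_mul_exp_neg_mul_atTop_nhds_zero 1 c hc).comp
    tendsto_neg_atBot_atTop).neg

theorem tendsto_exp_mul_atBot {c : ℝ} (hc : 0 < c) :
    Tendsto (fun w => exp (c * w)) atBot (𝓝 0) :=
  tendsto_exp_atBot.comp (tendsto_id.const_mul_atBot hc)

noncomputable def fabDeriv (a w : ℝ) : ℝ :=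
  ((1 + a) * exp ((1 + a) * w) - (1 - a) * exp ((1 - a) * w)) / 2

noncomputable def fabPrimitive (a w : ℝ) : ℝ :=
  exp ((1 + a) * w) / (2 * (1 + a)) - exp ((1 - a) * w) / (2 * (1 - a))

-- `∫_{f(a,w)}^0 ψ₋₁(a,x) dx` for `w ≤ M_a`
noncomputable def fabInvIntegral (a w : ℝ) : ℝ := fabPrimitive a w - w * fab a w

theorem fab_eq (a w : ℝ) : fab a w = (exp ((1 + a) * w) - exp ((1 - a) * w)) / 2 := by
  rw [fab, sinh_eq, div_mul_eq_mul_div, sub_mul, ← exp_add, ← exp_add]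
  ring_nf

theorem hasDerivAt_fab (a w : ℝ) : HasDerivAt (fab a) (fabDeriv a w) w := by
  have hp := ((hasDerivAt_id' w).const_mul (1 + a)).exp
  have hm := ((hasDerivAt_id' w).const_mul (1 - a)).exp
  rw [show fab a = fun w => (exp ((1 + a) * w) - exp ((1 - a) * w)) / 2 from funext (fab_eq a)]
  refine ((hp.sub hm).div_const 2).congr_deriv ?_
  rw [fabDeriv]
  ring

theorem hasDerivAt_fabPrimitive {a : ℝ} (hp : 1 + a ≠ 0) (hm : 1 - a ≠ 0) (w : ℝ) :
    HasDerivAt (fabPrimitive a) (fab a w) w := by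
  have ep := ((hasDerivAt_id' w).const_mul (1 + a)).exp.div_const (2 * (1 + a))
  have em := ((hasDerivAt_id' w).const_mul (1 - a)).exp.div_const (2 * (1 - a))
  refine (ep.sub em).congr_deriv ?_
  rw [fab_eq]
  field_simp

theorem hasDerivAt_fabInvIntegral {a : ℝ} (hp : 1 + a ≠ 0) (hm : 1 - a ≠ 0) (w : ℝ) :
    HasDerivAt (fabInvIntegral a) (-(w * fabDeriv a w)) w := by
  refine ((hasDerivAt_fabPrimitive hp hm w).sub
    ((hasDerivAt_id' w).mul (hasDerivAt_fab a w))).congr_deriv ?_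
  ring

theorem tendsto_fab_atBot {a : ℝ} (ha : a ∈ Ioo (-1) 1) : Tendsto (fab a) atBot (𝓝 0) := by
  obtain ⟨hp, hm⟩ := ha
  have h := ((tendsto_exp_mul_atBot (c := 1 + a) (by linarith)).sub
    (tendsto_exp_mul_atBot (c := 1 - a) (by linarith))).div_const 2
  rw [sub_zero, zero_div] at h
  exact h.congr fun w => (fab_eq a w).symm

theorem tendsto_fabInvIntegral_atBot {a : ℝ} (ha : a ∈ Ioo (-1) 1) :
    Tendsto (fabInvIntegral a) atBot (𝓝 0) := by
  obtain ⟨hp, hm⟩ := ha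
  have hF := ((tendsto_exp_mul_atBot (c := 1 + a) (by linarith)).div_const (2 * (1 + a))).sub
    ((tendsto_exp_mul_atBot (c := 1 - a) (by linarith)).div_const (2 * (1 - a)))
  have hwf := ((tendsto_mul_exp_mul_atBot (c := 1 + a) (by linarith)).sub
    (tendsto_mul_exp_mul_atBot (c := 1 - a) (by linarith))).div_const 2
  have h := hF.sub hwf
  simp only [zero_div, sub_zero] at h
  refine h.congr fun w => ?_
  rw [fabInvIntegral, fabPrimitive, fab_eq]
  ring

theorem fab_neg {a w : ℝ} (ha : 0 < a) (hw : w < 0) : fab a w < 0 :=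
  mul_neg_of_neg_of_pos (sinh_neg_iff.2 (mul_neg_of_pos_of_neg ha hw)) (exp_pos w)

section

variable {a : ℝ}

theorem exp_two_mul_mul_Ma (ha : a ∈ Ioo 0 1) :
    exp (2 * (a * Ma a)) = (1 - a) / (1 + a) := by
  have ha0 := ha.1.ne'
  rw [Ma, show 2 * (a * (1 / (2 * a) * log ((1 - a) / (1 + a)))) = log ((1 - a) / (1 + a)) by
    field_simp, exp_log (div_pos (by linarith [ha.2]) (by linarith [ha.1]))]

theorem one_add_mul_exp_mul_Ma_sq (ha : a ∈ Ioo 0 1) :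
    (1 + a) * exp (a * Ma a) ^ 2 = 1 - a := by
  rw [← exp_nat_mul, Nat.cast_ofNat, exp_two_mul_mul_Ma ha]
  field_simp [show 1 + a ≠ 0 by linarith [ha.1]]

theorem exp_Ma (ha : a ∈ Ioo 0 1) : exp (Ma a) = ((1 - a) / (1 + a)) ^ (1 / (2 * a)) := by
  rw [rpow_def_of_pos (div_pos (by linarith [ha.2]) (by linarith [ha.1])), Ma, mul_comm]

theorem La_eq (ha : a ∈ Ioo 0 1) :
    La a = -(a / ((1 + a) * exp (a * Ma a))) * exp (Ma a) := by
  have hsqrt : √(1 - a ^ 2) = (1 + a) * exp (a * Ma a) := by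
    rw [← sqrt_sq (mul_pos (by linarith [ha.1]) (exp_pos _)).le]
    congr 1
    linear_combination (-(1 + a)) * one_add_mul_exp_mul_Ma_sq ha
  rw [La, hsqrt, exp_Ma ha]

theorem fab_Ma (ha : a ∈ Ioo 0 1) : fab a (Ma a) = La a := by
  have hs := one_add_mul_exp_mul_Ma_sq ha
  have hp : 1 + a ≠ 0 := by linarith [ha.1]
  have hm : 1 - a ≠ 0 := by linarith [ha.2]
  rw [fab_eq, La_eq ha, add_mul, sub_mul, one_mul, exp_add, exp_sub]
  field_simp
  linear_combination hs

theorem fabPrimitive_Ma (ha : a ∈ Ioo 0 1) : fabPrimitive a (Ma a) = 2 * La a / (1 - a ^ 2) := by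
  have hs := one_add_mul_exp_mul_Ma_sq ha
  have hp : 1 + a ≠ 0 := by linarith [ha.1]
  have hm : 1 - a ≠ 0 := by linarith [ha.2]
  have hq : 1 - a ^ 2 ≠ 0 := by nlinarith [ha.1, ha.2]
  rw [fabPrimitive, La_eq ha, add_mul, sub_mul, one_mul, exp_add, exp_sub]
  field_simp
  linear_combination (1 - a) ^ 2 * hs

theorem fabInvIntegral_Ma (ha : a ∈ Ioo 0 1) :
    fabInvIntegral a (Ma a) = 2 * La a / (1 - a ^ 2) - La a * Ma a := by
  rw [fabInvIntegral, fabPrimitive_Ma ha, fab_Ma ha]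
  ring

theorem Ma_neg (ha : a ∈ Ioo 0 1) : Ma a < 0 :=
  mul_neg_of_pos_of_neg (one_div_pos.2 (by linarith [ha.1])) <|
    log_neg (div_pos (by linarith [ha.2]) (by linarith [ha.1]))
      ((div_lt_one (by linarith [ha.1])).2 (by linarith [ha.1]))

theorem fabDeriv_neg (ha : a ∈ Ioo 0 1) {w : ℝ} (hw : w < Ma a) : fabDeriv a w < 0 := by
  have hlt : (1 + a) * exp (2 * (a * w)) < 1 - a := by
    rw [← lt_div_iff₀' (by linarith [ha.1]), ← exp_two_mul_mul_Ma ha]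
    gcongr
    exact ha.1
  rw [fabDeriv, show (1 + a) * w = 2 * (a * w) + (1 - a) * w by ring, exp_add]
  nlinarith [exp_pos ((1 - a) * w)]

theorem strictAntiOn_fab (ha : a ∈ Ioo 0 1) : StrictAntiOn (fab a) (Iic (Ma a)) := by
  refine strictAntiOn_of_deriv_neg (convex_Iic _)
    (fun w _ => (hasDerivAt_fab a w).continuousAt.continuousWithinAt) fun w hw => ?_
  rw [(hasDerivAt_fab a w).deriv]
  exact fabDeriv_neg ha (by simpa using hw)

theorem fab_image_Iio_Ma (ha : a ∈ Ioo 0 1) : fab a '' Iio (Ma a) = Ioo (La a) 0 := by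
  refine Subset.antisymm ?_ fun y hy => ?_
  · rintro _ ⟨w, hw : w < Ma a, rfl⟩
    refine ⟨?_, fab_neg ha.1 (hw.trans (Ma_neg ha))⟩
    rw [← fab_Ma ha]
    exact strictAntiOn_fab ha hw.le (le_refl (Ma a)) hw
  · have hlim := tendsto_fab_atBot (a := a) ⟨by linarith [ha.1], ha.2⟩
    obtain ⟨w₀, hyw₀, hw₀⟩ :=
      ((hlim.eventually (lt_mem_nhds hy.2)).and (eventually_lt_atBot (Ma a))).exists
    have hIVT := intermediate_value_Ioo' hw₀.le
      (continuous_iff_continuousAt.2 fun w => (hasDerivAt_fab a w).continuousAt).continuousOn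
    obtain ⟨w, hw, rfl⟩ := hIVT ⟨(fab_Ma ha).symm ▸ hy.1, hyw₀⟩
    exact ⟨w, hw.2, rfl⟩

theorem integrableOn_neg_mul_fabDeriv (ha : a ∈ Ioo 0 1) :
    IntegrableOn (fun w => -(w * fabDeriv a w)) (Iic (Ma a)) :=
  integrableOn_Iic_deriv_of_nonpos'
    (fun w _ => hasDerivAt_fabInvIntegral (by linarith [ha.1]) (by linarith [ha.2]) w)
    (fun w hw => neg_nonpos.2 (mul_pos_of_neg_of_neg (hw.trans (Ma_neg ha))
      (fabDeriv_neg ha hw)).le)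
    (tendsto_fabInvIntegral_atBot ⟨by linarith [ha.1], ha.2⟩)

theorem integral_neg_mul_fabDeriv (ha : a ∈ Ioo 0 1) :
    ∫ w in Iic (Ma a), -(w * fabDeriv a w) = fabInvIntegral a (Ma a) := by
  rw [integral_Iic_of_hasDerivAt_of_tendsto'
    (fun w _ => hasDerivAt_fabInvIntegral (by linarith [ha.1]) (by linarith [ha.2]) w)
    (integrableOn_neg_mul_fabDeriv ha)
    (tendsto_fabInvIntegral_atBot ⟨by linarith [ha.1], ha.2⟩), sub_zero]

theorem two_mul_La_div_sub_La_mul_Ma (ha : a ∈ Ioo 0 1) :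
    2 * La a / (1 - a ^ 2) - La a * Ma a =
      (((1 - a) / (1 + a)) ^ (1 / (2 * a)) / (2 * √(1 - a ^ 2))) *
        (-4 * a / (1 - a ^ 2) + log ((1 - a) / (1 + a))) := by
  have ha0 := ha.1.ne'
  have hq : 1 - a ^ 2 ≠ 0 := by nlinarith [ha.1, ha.2]
  have hsqrt : √(1 - a ^ 2) ≠ 0 := (sqrt_pos.2 (by nlinarith [ha.1, ha.2])).ne'
  rw [La, Ma]
  field_simp
  ring

end

/-- The branch `ψ₋₁(a,·)` is integrable on `[L_a, 0)` with
`∫ ψ₋₁ = 2L_a/(1−a²) − L_a·M_a`, which equals the stated closed form. -/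
theorem stmt_4 (a : ℝ) (ha0 : 0 < a) (ha1 : a < 1) (psi1 : ℝ → ℝ)
    (hpsi1 : ∀ x, La a ≤ x → x < 0 → psi1 x ≤ Ma a ∧ fab a (psi1 x) = x) :
    MeasureTheory.IntegrableOn psi1 (Set.Ico (La a) 0) ∧
    (∫ x in Set.Ico (La a) 0, psi1 x) = 2 * La a / (1 - a ^ 2) - La a * Ma a ∧
    2 * La a / (1 - a ^ 2) - La a * Ma a =
      (((1 - a) / (1 + a)) ^ (1 / (2 * a)) / (2 * Real.sqrt (1 - a ^ 2))) *
        (-4 * a / (1 - a ^ 2) + Real.log ((1 - a) / (1 + a))) := by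
  have ha : a ∈ Ioo 0 1 := ⟨ha0, ha1⟩
  have hinv : LeftInvOn psi1 (fab a) (Iio (Ma a)) := fun w (hw : w < Ma a) => by
    have hfw := (fab_image_Iio_Ma ha).subset (mem_image_of_mem (fab a) hw)
    obtain ⟨hle, heq⟩ := hpsi1 (fab a w) hfw.1.le hfw.2
    exact (strictAntiOn_fab ha).injOn hle hw.le heq
  have hderiv (w : ℝ) (_ : w ∈ Iio (Ma a)) :
      HasDerivWithinAt (fab a) (fabDeriv a w) (Iio (Ma a)) w :=
    (hasDerivAt_fab a w).hasDerivWithinAt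
  have hintegrand : EqOn (fun w => |fabDeriv a w| * w) (fun w => -(w * fabDeriv a w))
      (Iio (Ma a)) := fun w hw => by
    dsimp only
    rw [abs_of_neg (fabDeriv_neg ha hw)]
    ring
  refine ⟨?_, ?_, two_mul_La_div_sub_La_mul_Ma ha⟩
  · rw [integrableOn_Ico_iff_integrableOn_Ioo, ← fab_image_Iio_Ma ha,
      integrableOn_image_iff_of_leftInvOn measurableSet_Iio hderiv hinv,
      integrableOn_congr_fun hintegrand measurableSet_Iio]
    exact (integrableOn_neg_mul_fabDeriv ha).mono_set Iio_subset_Iic_self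
  · rw [integral_Ico_eq_integral_Ioo, ← fab_image_Iio_Ma ha,
      integral_image_eq_of_leftInvOn measurableSet_Iio hderiv hinv,
      setIntegral_congr_fun measurableSet_Iio hintegrand, ← integral_Iic_eq_integral_Iio,
      integral_neg_mul_fabDeriv ha, fabInvIntegral_Ma ha]
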